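/- Let m = p + q with q ≥ 1. If F is a Clifford-algebra-valued polynomial in m variables with ∂_v F = 0 and F = x·G for some Clifford-algebra-valued polynomial G (where x·G = ∑_{i=1}^m X_i·e_i·G is multiplication by the full vector variable), then F = 0. -/

import Mathlib

/-!
Write `q = #T` and `E_T = ∑_{i ∈ T} X_i ∂_i` for the Euler operator in the variables `T`. The
identities `∂_T x + x ∂_T = -(q + 2 E_T)` and `∂_T E_T = E_T ∂_T + ∂_T` show that a relation
`a K + b E_T K + x ∂_T K = 0` implies `(q - a - b) ∂_T K + (2 - b) E_T ∂_T K + x ∂_T² K = 0`.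
`∂_T (x G) = 0` is the relation with `(a, b) = (q, 2)` for `G`, so the relations satisfied by the
`∂_T^n G` have coefficients alternating between `(q + 2n, 2)` and `(-(2n + 2), 0)`. Since `∂_T` is
locally nilpotent, `∂_T^N G = 0` for large `N`; descending from there, each `∂_T^n G` vanishes,
because `a + b E_T` multiplies a monomial of degree `k` in the variables `T` by `a + b k ≠ 0`.
-/

open scoped TensorProduct
open MvPolynomial

noncomputable section

/-- The quadratic form `Q(x) = -(x₁² + ⋯ + x_m²)` on `ℂ^m`. -/
def Qf (m : ℕ) : QuadraticForm ℂ (Fin m → ℂ) :=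
  QuadraticMap.weightedSumSquares ℂ (fun _ : Fin m => (-1 : ℂ))

/-- The complex Clifford algebra `ℂ_m`. -/
abbrev Cl (m : ℕ) := CliffordAlgebra (Qf m)

/-- The generators `e_i`, satisfying `e_i e_j + e_j e_i = -2δ_ij`. -/
def gen (m : ℕ) (i : Fin m) : Cl m := CliffordAlgebra.ι (Qf m) (Pi.single i 1)

/-- Clifford-algebra-valued polynomials `𝒫 = MvPolynomial (Fin m) ℂ ⊗[ℂ] ℂ_m`. -/
abbrev CPoly (m : ℕ) := MvPolynomial (Fin m) ℂ ⊗[ℂ] Cl m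

/-- Partial derivative `∂_{X_i}` acting on the polynomial factor. -/
def pd (m : ℕ) (i : Fin m) : CPoly m →ₗ[ℂ] CPoly m :=
  LinearMap.rTensor (Cl m) (MvPolynomial.pderiv i).toLinearMap

/-- The vector variable `x = ∑ X_i ⊗ e_i` as an element of `𝒫`. -/
def xE (m : ℕ) : CPoly m := ∑ i, (X i : MvPolynomial (Fin m) ℂ) ⊗ₜ[ℂ] gen m i

/-- The Dirac operator `∂F = ∑ e_i ∂_{X_i} F`. -/
def dirac (m : ℕ) (F : CPoly m) : CPoly m :=
  ∑ i, ((1 : MvPolynomial (Fin m) ℂ) ⊗ₜ[ℂ] gen m i) * pd m i F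

/-- The polynomial `r² = ∑ X_i²`. -/
def r2 (m : ℕ) : MvPolynomial (Fin m) ℂ := ∑ i, X i ^ 2
/-- The Dirac operator in the `v`-variables (the last `q` variables). -/
def diracV (p q : ℕ) (F : CPoly (p + q)) : CPoly (p + q) :=
  ∑ i ∈ Finset.univ.filter (fun i : Fin (p + q) => p ≤ (i : ℕ)),
    ((1 : MvPolynomial (Fin (p + q)) ℂ) ⊗ₜ[ℂ] gen (p + q) i) * pd (p + q) i F

namespace MvPolynomial

variable {σ R : Type*}

theorem pderiv_pderiv_comm [CommRing R] (i j : σ) (P : MvPolynomial σ R) :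
    pderiv i (pderiv j P) = pderiv j (pderiv i P) := by
  classical
  have h : ⁅pderiv (R := R) i, pderiv (R := R) j⁆ = 0 := by
    ext k
    simp [Derivation.commutator_apply, Pi.single_apply, apply_ite]
  rw [← sub_eq_zero, ← Derivation.commutator_apply, h, Derivation.zero_apply]

theorem totalDegree_pderiv_le [CommSemiring R] (i : σ) (P : MvPolynomial σ R) :
    (pderiv i P).totalDegree ≤ P.totalDegree - 1 := by
  classical
  refine Finset.sup_le fun s hs => ?_
  have hs' : s + Finsupp.single i 1 ∈ P.support := by
    rw [mem_support_iff, coeff_pderiv] at hs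
    exact mem_support_iff.mpr (left_ne_zero_of_mul hs)
  have := le_totalDegree hs'
  rw [Finsupp.sum_add_index' (fun _ => rfl) (fun _ _ _ => rfl),
    Finsupp.sum_single_index rfl] at this
  omega

theorem pderiv_eq_zero_of_totalDegree_eq_zero [CommSemiring R] (i : σ) {P : MvPolynomial σ R}
    (hP : P.totalDegree = 0) : pderiv i P = 0 := by
  rw [totalDegree_eq_zero_iff_eq_C.mp hP, pderiv_C]

def eulerOn [CommSemiring R] (T : Finset σ) : MvPolynomial σ R →ₗ[R] MvPolynomial σ R :=
  ∑ i ∈ T, LinearMap.mulLeft R (X i) ∘ₗ (pderiv i).toLinearMap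

theorem coeff_X_mul_pderiv [CommSemiring R] (i : σ) (P : MvPolynomial σ R) (s : σ →₀ ℕ) :
    coeff s (X i * pderiv i P) = s i * coeff s P := by
  classical
  induction P using MvPolynomial.induction_on' with
  | monomial t r =>
    rw [X_mul_pderiv_monomial, coeff_smul, coeff_monomial]
    split_ifs with h <;> simp [h, nsmul_eq_mul]
  | add P Q hP hQ => simp [mul_add, hP, hQ]

theorem coeff_eulerOn [CommSemiring R] (T : Finset σ) (P : MvPolynomial σ R) (s : σ →₀ ℕ) :
    coeff s (eulerOn T P) = (∑ i ∈ T, s i : ℕ) * coeff s P := by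
  simp [eulerOn, coeff_sum, coeff_X_mul_pderiv, Finset.sum_mul]

theorem zsmul_add_zsmul_eulerOn_injective [CommRing R] [IsDomain R] [CharZero R] (T : Finset σ)
    {a b : ℤ} (hab : ∀ k : ℕ, a + b * k ≠ 0) :
    Function.Injective
      (a • LinearMap.id + b • eulerOn T : MvPolynomial σ R →ₗ[R] MvPolynomial σ R) := by
  refine (injective_iff_map_eq_zero _).mpr fun P hP => ?_
  ext s
  have h : ((a + b * (∑ i ∈ T, s i : ℕ) : ℤ) : R) * coeff s P = 0 := by
    have := congrArg (coeff s) hP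
    simp only [LinearMap.add_apply, LinearMap.smul_apply, LinearMap.id_apply, coeff_add,
      coeff_zero] at this
    simp only [← Int.cast_smul_eq_zsmul R, coeff_smul, coeff_eulerOn, smul_eq_mul] at this
    rw [← this]
    push_cast
    ring
  rw [coeff_zero]
  exact (mul_eq_zero.mp h).resolve_left (Int.cast_ne_zero.mpr (hab _))

end MvPolynomial

theorem Qf_single {m : ℕ} (i : Fin m) : Qf m (Pi.single i 1) = -1 := by
  simp [Qf, QuadraticMap.weightedSumSquares_apply, Pi.single_apply]

theorem polar_Qf_single {m : ℕ} (i j : Fin m) :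
    QuadraticMap.polar (Qf m) (Pi.single i 1) (Pi.single j 1) = if i = j then -2 else 0 := by
  split_ifs with h
  · subst h
    norm_num [Qf, QuadraticMap.polar, QuadraticMap.weightedSumSquares_apply, Pi.single_apply,
      mul_add, mul_ite, Finset.sum_add_distrib]
  · simp [Qf, QuadraticMap.polar, QuadraticMap.weightedSumSquares_apply, Pi.single_apply,
      mul_add, mul_ite, Finset.sum_add_distrib, h, Ne.symm h]

namespace Algebra.TensorProduct

variable {R A B : Type*} [CommSemiring R] [Semiring B] [Algebra R B]

theorem one_tmul_algebraMap [Semiring A] [Algebra R A] (r : R) :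
    (1 : A) ⊗ₜ[R] algebraMap R B r = r • 1 := by
  rw [Algebra.algebraMap_eq_smul_one, TensorProduct.tmul_smul, one_def]

theorem commute_tmul_one [CommSemiring A] [Algebra R A] (a : A) (F : A ⊗[R] B) :
    Commute (a ⊗ₜ[R] (1 : B)) F := by
  induction F using TensorProduct.induction_on with
  | zero => exact Commute.zero_right _
  | tmul b c => simp [Commute, SemiconjBy, tmul_mul_tmul, mul_comm a]
  | add F G hF hG => exact hF.add_right hG

end Algebra.TensorProduct

namespace CPoly

open Algebra.TensorProduct (tmul_mul_tmul)

variable {m : ℕ}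

def cliffordGen (i : Fin m) : CPoly m := 1 ⊗ₜ gen m i

def polyVar (i : Fin m) : CPoly m := X i ⊗ₜ 1

-- Scalars are kept in `ℂ`: `rw` does not match a ring-level `-1` in `CPoly m` against the
-- negation of the tensor product.
theorem cliffordGen_mul_self (i : Fin m) : cliffordGen i * cliffordGen i = (-1 : ℂ) • 1 := by
  rw [cliffordGen, tmul_mul_tmul, one_mul, gen, CliffordAlgebra.ι_sq_scalar, Qf_single,
    Algebra.TensorProduct.one_tmul_algebraMap]

theorem cliffordGen_mul_add_swap (i j : Fin m) :
    cliffordGen i * cliffordGen j + cliffordGen j * cliffordGen i =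
      (if i = j then -2 else 0 : ℂ) • 1 := by
  rw [cliffordGen, cliffordGen, tmul_mul_tmul, tmul_mul_tmul, one_mul, ← TensorProduct.tmul_add,
    gen, gen, CliffordAlgebra.ι_mul_ι_add_swap, polar_Qf_single,
    Algebra.TensorProduct.one_tmul_algebraMap]

theorem commute_polyVar (i : Fin m) (F : CPoly m) : Commute (polyVar i) F :=
  Algebra.TensorProduct.commute_tmul_one _ F

theorem xE_eq_sum : xE m = ∑ j, polyVar j * cliffordGen j := by
  simp [xE, polyVar, cliffordGen, tmul_mul_tmul]

theorem cliffordGen_mul_xE_add_xE_mul (i : Fin m) :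
    cliffordGen i * xE m + xE m * cliffordGen i = (-2 : ℂ) • polyVar i := by
  have h (j : Fin m) : cliffordGen i * (polyVar j * cliffordGen j) +
      polyVar j * cliffordGen j * cliffordGen i =
        (if i = j then -2 else 0 : ℂ) • polyVar j := by
    rw [← mul_one (polyVar j), ← mul_smul_comm, ← cliffordGen_mul_add_swap, mul_one, mul_add,
      ← mul_assoc (polyVar j) (cliffordGen i), (commute_polyVar j (cliffordGen i)).eq]
    simp only [mul_assoc]
  simp only [xE_eq_sum, Finset.mul_sum, Finset.sum_mul, ← Finset.sum_add_distrib, h,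
    ite_smul, zero_smul, Finset.sum_ite_eq, Finset.mem_univ, if_true]

theorem pd_tmul (i : Fin m) (P : MvPolynomial (Fin m) ℂ) (a : Cl m) :
    pd m i (P ⊗ₜ a) = pderiv i P ⊗ₜ a := rfl

theorem pd_mul (i : Fin m) (F G : CPoly m) : pd m i (F * G) = pd m i F * G + F * pd m i G := by
  induction F using TensorProduct.induction_on with
  | zero => simp
  | add F₁ F₂ h₁ h₂ => simp only [add_mul, map_add, h₁, h₂]; abel
  | tmul P a =>
    induction G using TensorProduct.induction_on with
    | zero => simp
    | add G₁ G₂ h₁ h₂ => simp only [mul_add, map_add, h₁, h₂]; abel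
    | tmul Q b =>
      rw [tmul_mul_tmul, pd_tmul, pd_tmul, pd_tmul, tmul_mul_tmul, tmul_mul_tmul, pderiv_mul,
        TensorProduct.add_tmul]

theorem pd_cliffordGen_mul (i j : Fin m) (F : CPoly m) :
    pd m i (cliffordGen j * F) = cliffordGen j * pd m i F := by
  simp [pd_mul, cliffordGen, pd_tmul]

theorem pd_polyVar_mul (i j : Fin m) (F : CPoly m) :
    pd m i (polyVar j * F) = (if i = j then F else 0) + polyVar j * pd m i F := by
  simp [pd_mul, polyVar, pd_tmul, Pi.single_apply, eq_comm, TensorProduct.ite_tmul,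
    ← Algebra.TensorProduct.one_def]

theorem pd_xE (i : Fin m) : pd m i (xE m) = cliffordGen i := by
  simp [xE, pd_tmul, Pi.single_apply, cliffordGen, TensorProduct.ite_tmul]

theorem pd_pd_comm (i j : Fin m) (F : CPoly m) : pd m i (pd m j F) = pd m j (pd m i F) := by
  induction F using TensorProduct.induction_on with
  | zero => simp
  | tmul P a => rw [pd_tmul, pd_tmul, pd_tmul, pd_tmul, pderiv_pderiv_comm]
  | add F G hF hG => rw [map_add, map_add, hF, hG, map_add, map_add]

def diracOn (T : Finset (Fin m)) : Module.End ℂ (CPoly m) :=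
  ∑ i ∈ T, LinearMap.mulLeft ℂ (cliffordGen i) ∘ₗ pd m i

theorem diracOn_apply (T : Finset (Fin m)) (F : CPoly m) :
    diracOn T F = ∑ i ∈ T, cliffordGen i * pd m i F := by
  simp [diracOn]

def eulerOn (T : Finset (Fin m)) : Module.End ℂ (CPoly m) :=
  (MvPolynomial.eulerOn T).rTensor (Cl m)

theorem eulerOn_apply (T : Finset (Fin m)) (F : CPoly m) :
    eulerOn T F = ∑ i ∈ T, polyVar i * pd m i F := by
  induction F using TensorProduct.induction_on with
  | zero => simp
  | tmul P a =>
    simp [eulerOn, MvPolynomial.eulerOn, polyVar, pd_tmul, tmul_mul_tmul, TensorProduct.sum_tmul]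
  | add F G hF hG => simp [map_add, hF, hG, mul_add, Finset.sum_add_distrib]

theorem diracOn_xE_mul_add (T : Finset (Fin m)) (F : CPoly m) :
    diracOn T (xE m * F) + xE m * diracOn T F = -((T.card : ℤ) • F + 2 • eulerOn T F) := by
  have h (i : Fin m) : cliffordGen i * pd m i (xE m * F) + xE m * (cliffordGen i * pd m i F) =
      -F - 2 • (polyVar i * pd m i F) := by
    rw [pd_mul, pd_xE, mul_add, ← mul_assoc, cliffordGen_mul_self, ← mul_assoc, ← mul_assoc,
      add_assoc, ← add_mul, cliffordGen_mul_xE_add_xE_mul, smul_mul_assoc, smul_mul_assoc,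
      one_mul]
    module
  rw [diracOn_apply, diracOn_apply, eulerOn_apply, Finset.mul_sum, ← Finset.sum_add_distrib,
    Finset.sum_congr rfl fun i _ => h i, Finset.sum_sub_distrib, Finset.sum_neg_distrib,
    Finset.sum_const, ← Finset.smul_sum]
  simp only [natCast_zsmul]
  abel

theorem diracOn_eulerOn (T : Finset (Fin m)) (F : CPoly m) :
    diracOn T (eulerOn T F) = eulerOn T (diracOn T F) + diracOn T F := by
  have h (i j : Fin m) : cliffordGen i * (polyVar j * pd m i (pd m j F)) =
      polyVar j * (cliffordGen i * pd m j (pd m i F)) := by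
    rw [← mul_assoc, ← (commute_polyVar j (cliffordGen i)).eq, mul_assoc, pd_pd_comm]
  simp only [diracOn_apply, eulerOn_apply, map_sum, pd_polyVar_mul, pd_cliffordGen_mul,
    mul_add, Finset.sum_add_distrib, mul_ite, mul_zero, Finset.sum_ite_eq',
    Finset.sum_ite_mem, Finset.inter_self, h]
  rw [Finset.sum_comm, add_comm]

theorem diracOn_tmul (T : Finset (Fin m)) (P : MvPolynomial (Fin m) ℂ) (a : Cl m) :
    diracOn T (P ⊗ₜ a) = ∑ i ∈ T, pderiv i P ⊗ₜ (gen m i * a) := by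
  simp [diracOn_apply, cliffordGen, pd_tmul, tmul_mul_tmul]

theorem diracOn_pow_succ_tmul_eq_zero (T : Finset (Fin m)) {n : ℕ}
    {P : MvPolynomial (Fin m) ℂ} (hP : P.totalDegree ≤ n) (a : Cl m) :
    (diracOn T ^ (n + 1)) (P ⊗ₜ a) = 0 := by
  induction n generalizing P a with
  | zero =>
    rw [pow_one, diracOn_tmul]
    refine Finset.sum_eq_zero fun i _ => ?_
    rw [pderiv_eq_zero_of_totalDegree_eq_zero i (Nat.le_zero.mp hP), TensorProduct.zero_tmul]
  | succ n ih =>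
    rw [pow_succ, Module.End.mul_apply, diracOn_tmul, map_sum]
    exact Finset.sum_eq_zero fun i _ => ih ((totalDegree_pderiv_le i P).trans (by omega)) _

theorem exists_diracOn_pow_eq_zero (T : Finset (Fin m)) (F : CPoly m) :
    ∃ N, (diracOn T ^ N) F = 0 := by
  induction F using TensorProduct.induction_on with
  | zero => exact ⟨0, map_zero _⟩
  | tmul P a => exact ⟨P.totalDegree + 1, diracOn_pow_succ_tmul_eq_zero T le_rfl a⟩
  | add F G hF hG =>
    obtain ⟨N₁, h₁⟩ := hF
    obtain ⟨N₂, h₂⟩ := hG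
    refine ⟨max N₁ N₂, ?_⟩
    rw [map_add, Module.End.pow_map_zero_of_le (le_max_left _ _) h₁,
      Module.End.pow_map_zero_of_le (le_max_right _ _) h₂, add_zero]

theorem eq_zero_of_zsmul_add_zsmul_eulerOn_eq_zero {T : Finset (Fin m)} {a b : ℤ}
    (hab : ∀ k : ℕ, a + b * k ≠ 0) {K : CPoly m} (h : a • K + b • eulerOn T K = 0) : K = 0 := by
  refine Module.Flat.rTensor_preserves_injective_linearMap (M := Cl m) _
    (MvPolynomial.zsmul_add_zsmul_eulerOn_injective (R := ℂ) T hab) ?_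
  rw [map_zero, ← h, LinearMap.rTensor_add, ← Int.cast_smul_eq_zsmul ℂ a,
    ← Int.cast_smul_eq_zsmul ℂ b, LinearMap.rTensor_smul, LinearMap.rTensor_smul,
    LinearMap.rTensor_id]
  simp [eulerOn, Int.cast_smul_eq_zsmul]

theorem diracOn_relation {T : Finset (Fin m)} {a b : ℤ} {K : CPoly m}
    (h : a • K + b • eulerOn T K + xE m * diracOn T K = 0) :
    ((T.card : ℤ) - a - b) • diracOn T K + (2 - b) • eulerOn T (diracOn T K) +
      xE m * diracOn T (diracOn T K) = 0 := by
  have hD := congrArg (diracOn T) h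
  rw [map_add, map_add, map_zsmul, map_zsmul, diracOn_eulerOn, map_zero] at hD
  have hx := diracOn_xE_mul_add T (diracOn T K)
  linear_combination (norm := module) hx - hD

-- The disjunction is kept by `(a, b) ↦ (#T - a - b, 2 - b)` and forces `a + b k ≠ 0`.
theorem eq_zero_of_diracOn_pow_eq_zero_of_relation {T : Finset (Fin m)} (hT : T.Nonempty) (N : ℕ)
    (K : CPoly m) (a b : ℤ) (hK : (diracOn T ^ N) K = 0)
    (hab : b = 2 ∧ T.card ≤ a ∨ b = 0 ∧ a ≤ -2)
    (h : a • K + b • eulerOn T K + xE m * diracOn T K = 0) : K = 0 := by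
  induction N generalizing K a b with
  | zero => simpa using hK
  | succ N ih =>
    rw [pow_succ, Module.End.mul_apply] at hK
    have hDK : diracOn T K = 0 := ih _ _ _ hK (by omega) (diracOn_relation h)
    rw [hDK, mul_zero, add_zero] at h
    have hq := hT.card_pos
    refine eq_zero_of_zsmul_add_zsmul_eulerOn_eq_zero (fun k => ?_) h
    rcases hab with ⟨rfl, ha⟩ | ⟨rfl, ha⟩ <;> omega

theorem eq_zero_of_diracOn_xE_mul_eq_zero {T : Finset (Fin m)} (hT : T.Nonempty) {G : CPoly m}
    (h : diracOn T (xE m * G) = 0) : G = 0 := by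
  obtain ⟨N, hN⟩ := exists_diracOn_pow_eq_zero T G
  refine eq_zero_of_diracOn_pow_eq_zero_of_relation hT N G T.card 2 hN (.inl ⟨rfl, le_rfl⟩) ?_
  have hG := diracOn_xE_mul_add T G
  rw [h, zero_add] at hG
  rw [hG]
  module

end CPoly

theorem stmt16 (p q : ℕ) (hq : 1 ≤ q) (F G : CPoly (p + q))
    (hv : diracV p q F = 0) (hF : F = xE (p + q) * G) : F = 0 := by
  have hT : (Finset.univ.filter fun i : Fin (p + q) => p ≤ (i : ℕ)).Nonempty :=
    ⟨⟨p, by omega⟩, by simp⟩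
  have hG : G = 0 := CPoly.eq_zero_of_diracOn_xE_mul_eq_zero hT (by
    rw [← hF, ← hv, CPoly.diracOn_apply]
    rfl)
  rw [hF, hG, mul_zero]

end
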